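/- arXiv:1507.01020 — 10 statements merged into one kernel-verified Lean document; each statement's English description precedes it below -/
import Mathlib

section
/- In a complete metric space, every subset that is both a Gδ set (a countable intersection of open sets) and an Fσ set (a countable union of closed sets) has a nowhere dense frontier (boundary). -/
/-- In a complete metric space, every subset that is both a Gδ set (countable
intersection of open sets) and an Fσ set (countable union of closed sets) has a
nowhere dense frontier. -/
theorem stmt0 {X : Type*} [MetricSpace X] [CompleteSpace X] (L : Set X)
    (hGdelta : ∃ S : ℕ → Set X, (∀ n, IsOpen (S n)) ∧ L = ⋂ n, S n)
    (hFsigma : ∃ S : ℕ → Set X, (∀ n, IsClosed (S n)) ∧ L = ⋃ n, S n) :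
    IsNowhereDense (frontier L) := by
  have hLGδ : IsGδ L := by
    obtain ⟨S, hS, rfl⟩ := hGdelta
    exact .iInter_of_isOpen hS
  have hLcGδ : IsGδ Lᶜ := by
    obtain ⟨S, hS, rfl⟩ := hFsigma
    rw [Set.compl_iUnion]
    exact .iInter fun n => ((hS n).isOpen_compl).isGδ
  rw [(isClosed_frontier).isNowhereDense_iff]
  by_contra h
  obtain ⟨x, hx⟩ := Set.nonempty_iff_ne_empty.2 h
  set U := interior (frontier L) with hU
  have hUopen : IsOpen U := isOpen_interior
  have hUc : IsGδ Uᶜ := hUopen.isClosed_compl.isGδ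
  have hA : IsGδ (L ∪ Uᶜ) := hLGδ.union hUc
  have hB : IsGδ (Lᶜ ∪ Uᶜ) := hLcGδ.union hUc
  have hsub : U ⊆ closure L ∩ closure Lᶜ := fun y hy => by simpa [frontier_eq_closure_inter_closure] using interior_subset hy
  have hdA : Dense (L ∪ Uᶜ) := by
    intro y
    rcases Classical.em (y ∈ U) with hy | hy
    · exact closure_mono Set.subset_union_left (hsub hy).1
    · exact subset_closure (Or.inr hy)
  have hdB : Dense (Lᶜ ∪ Uᶜ) := by
    intro y
    rcases Classical.em (y ∈ U) with hy | hy
    · exact closure_mono Set.subset_union_left (hsub hy).2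
    · exact subset_closure (Or.inr hy)
  have hdense := hdA.inter_of_Gδ hA hB hdB
  obtain ⟨z, hzU, hzAB⟩ := hdense.inter_open_nonempty U hUopen ⟨x, hx⟩
  rcases hzAB.1 with h1 | h1
  · rcases hzAB.2 with h2 | h2
    · exact h2 h1
    · exact h2 hzU
  · exact h1 hzU
end

section
/- Let L ⊆ Σ^ω be any language and suppose there exists a finite word f ∈ Σ* such that either Σ* f Σ^ω ⊆ L or Σ* f Σ^ω ∩ L = ∅ (f is a 'forbidden' or 'guaranteed' factor). Then L is monitorable; moreover, there exists a monitor for L with at most |f| + 2 states. -/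
/-- Concatenation of a finite word with an infinite word. -/
def cat {A : Type*} (x : List A) (α : ℕ → A) : ℕ → A :=
  fun n => if h : n < x.length then x[n] else α (n - x.length)

/-- A monitor: a finite deterministic transition system with designated
absorbing states `⊥` (bot) and `⊤` (top), at least one of which is present,
such that from every state some present sink is reachable. -/
structure Monitor (A : Type*) where
  Q : Type
  finQ : Finite Q
  δ : Q → A → Q
  init : Q
  bot : Option Q
  top : Option Q
  sink_exists : bot.isSome ∨ top.isSome
  bot_ne_top : ∀ p q, bot = some p → top = some q → p ≠ q
  bot_absorb : ∀ p a, bot = some p → δ p a = p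
  top_absorb : ∀ p a, top = some p → δ p a = p
  reach : ∀ q : Q, ∃ w : List A, bot = some (w.foldl δ q) ∨ top = some (w.foldl δ q)

/-- `M` is a monitor for the language `L ⊆ Σ^ω`: whenever the run from the
initial state on a finite word `u` reaches `⊥` then `uΣ^ω ∩ L = ∅`, and
whenever it reaches `⊤` then `uΣ^ω ⊆ L`. -/
def Monitor.IsMonitorFor {A : Type*} (M : Monitor A) (L : Set (ℕ → A)) : Prop :=
  ∀ u : List A,
    (M.bot = some (u.foldl M.δ M.init) → ∀ α, cat u α ∉ L) ∧
    (M.top = some (u.foldl M.δ M.init) → ∀ α, cat u α ∈ L)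

/-- A language is monitorable if some monitor for it exists. -/
def Monitorable {A : Type*} (L : Set (ℕ → A)) : Prop :=
  ∃ M : Monitor A, M.IsMonitorFor L

/-- `α ∈ Σ* f Σ^ω`: the infinite word `α` contains the finite word `f` as a factor. -/
def hasFactor {A : Type*} (f : List A) (α : ℕ → A) : Prop :=
  ∃ k, ∀ i, (h : i < f.length) → α (k + i) = f[i]'h


section Aux

variable {A : Type*} [DecidableEq A]

def mdel (f : List A) : Fin (f.length + 1) → A → Fin (f.length + 1) :=
  fun s a => if h : (s : ℕ) < f.length then
    (if a = f[(s:ℕ)]'h then ⟨s + 1, by omega⟩ else ⟨0, by omega⟩) else s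

def mrun (f : List A) (u : List A) : Fin (f.length + 1) :=
  u.foldl (mdel f) ⟨0, by omega⟩

lemma mdel_run_suffix (f : List A) (g : List A) : ∀ j (hj : j + g.length = f.length)
    (hg : f.drop j = g), g.foldl (mdel f) ⟨j, by omega⟩ = ⟨f.length, by omega⟩ := by
  induction g with
  | nil => intro j hj hg; simp at hj; simp [hj]
  | cons a g ih =>
      intro j hj hg
      have hjlt : j < f.length := by simp at hj; omega
      have ha : a = f[j]'hjlt := by
        rw [List.drop_eq_getElem_cons hjlt] at hg
        exact (List.cons.injEq _ _ _ _ ▸ hg).1.symm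
      have hstep : mdel f ⟨j, by omega⟩ a = ⟨j + 1, by omega⟩ := by
        simp [mdel, hjlt, ha]
      rw [List.foldl_cons, hstep]
      apply ih (j + 1) (by simp at hj ⊢; omega)
      rw [List.drop_eq_getElem_cons hjlt] at hg
      exact (List.cons.injEq _ _ _ _ ▸ hg).2
lemma mdel_run_zero (f : List A) : f.foldl (mdel f) ⟨0, by omega⟩ = ⟨f.length, by omega⟩ :=
  mdel_run_suffix f f 0 (by simp) (by simp)

lemma mdel_subsing (f : List A) (hA : ∀ x y : A, x = y) :
    ∀ (w : List A) (j : Fin (f.length + 1)), f.length ≤ (j : ℕ) + w.length →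
      w.foldl (mdel f) j = ⟨f.length, by omega⟩ := by
  intro w
  induction w with
  | nil => intro j hj; simp at hj ⊢; exact Fin.ext (by simp; omega)
  | cons a w ih =>
      intro j hj
      rw [List.foldl_cons]
      by_cases h : (j : ℕ) < f.length
      · have : mdel f j a = ⟨(j : ℕ) + 1, by omega⟩ := by
          have := hA a (f[(j:ℕ)]'h); simp [mdel, h, this]
        rw [this]; exact ih _ (by simp at hj ⊢; omega)
      · have : mdel f j a = j := by simp [mdel, h]
        rw [this]; exact ih _ (by simp at hj ⊢; omega)

lemma mdel_reach (f : List A) (q : Fin (f.length + 1)) :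
    ∃ w : List A, w.foldl (mdel f) q = ⟨f.length, by omega⟩ := by
  by_cases hq : (q : ℕ) < f.length
  · by_cases hx : ∃ x : A, x ≠ f[(q:ℕ)]'hq
    · obtain ⟨x, hx⟩ := hx
      refine ⟨x :: f, ?_⟩
      have h0 : mdel f q x = ⟨0, by omega⟩ := by simp [mdel, hq, hx]
      rw [List.foldl_cons, h0]; exact mdel_run_zero f
    · push_neg at hx
      have hA : ∀ x y : A, x = y := fun x y => (hx x).trans (hx y).symm
      exact ⟨f, mdel_subsing f hA f q (Nat.le_add_left _ _)⟩
  · refine ⟨[], ?_⟩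
    simp only [List.foldl_nil]
    exact Fin.ext (by simp; omega)

lemma mdel_inv (f : List A) (u : List A) :
    ((mrun f u : ℕ) = f.length →
      ∃ k, ∃ _hk : k + f.length ≤ u.length,
        ∀ i (hi : i < f.length), u[k + i]'(by omega) = f[i]'hi) ∧
    ((hm : (mrun f u : ℕ) < f.length) →
      ∃ _hl : (mrun f u : ℕ) ≤ u.length,
        ∀ i (hi : i < (mrun f u : ℕ)),
          u[u.length - (mrun f u : ℕ) + i]'(by omega) = f[i]'(by omega)) := by
  induction u using List.reverseRecOn with
  | nil =>
      constructor
      · intro h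
        have hf0 : f.length = 0 := by simpa [mrun] using h.symm
        exact ⟨0, by simp only [List.length_nil, Nat.zero_add]; omega, fun i hi => absurd hi (by omega)⟩
      · intro h
        refine ⟨by simp [mrun], fun i hi => ?_⟩
        simp [mrun] at hi
  | append_singleton u a ih =>
      have hrun : mrun f (u ++ [a]) = mdel f (mrun f u) a := by
        simp [mrun, List.foldl_append]
      set s := mrun f u with hs
      by_cases h : (s : ℕ) < f.length
      · obtain ⟨hlen, hmatch⟩ := ih.2 h
        by_cases ha : a = f[(s:ℕ)]'h
        · have hval : (mrun f (u ++ [a]) : ℕ) = (s : ℕ) + 1 := by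
            rw [hrun]; simp [mdel, h, ha]
          have key : ∀ i (hi : i < (s:ℕ) + 1) (hif : i < f.length),
              (u ++ [a])[u.length - (s:ℕ) + i]'(by simp; omega) = f[i]'hif := by
            intro i hi hif
            rcases Nat.lt_or_ge i (s : ℕ) with hi' | hi'
            · rw [List.getElem_append_left (by omega)]; exact hmatch i hi'
            · have hieq : i = (s : ℕ) := by omega
              subst hieq
              have hidx : u.length - (s:ℕ) + (s:ℕ) = u.length := by omega
              simp_rw [hidx]
              simp [List.getElem_concat_length, ha]
          constructor
          · intro heq
            rw [hval] at heq
            refine ⟨u.length - (s : ℕ), by simp; omega, ?_⟩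
            intro i hi
            exact key i (by omega) hi
          · intro hlt
            simp only [hval] at hlt ⊢
            refine ⟨by simp; omega, ?_⟩
            intro i hi
            have hidx : (u ++ [a]).length - ((s:ℕ) + 1) + i = u.length - (s:ℕ) + i := by
              simp only [List.length_append, List.length_cons, List.length_nil]; omega
            simp_rw [hidx]
            exact key i hi (by omega)
        · have hval : (mrun f (u ++ [a]) : ℕ) = 0 := by
            rw [hrun]; simp [mdel, h, ha]
          constructor
          · intro heq
            rw [hval] at heq
            exact ⟨0, by simp; omega, fun i hi => by omega⟩
          · intro hlt
            simp only [hval]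
            exact ⟨by omega, fun i hi => by omega⟩
      · have hval : (mrun f (u ++ [a]) : ℕ) = (s : ℕ) := by rw [hrun]; simp [mdel, h]
        have hseq : (s : ℕ) = f.length := by omega
        constructor
        · intro _
          obtain ⟨k, hk, hmk⟩ := ih.1 hseq
          refine ⟨k, by simp; omega, ?_⟩
          intro i hi
          rw [List.getElem_append_left (by omega)]
          exact hmk i hi
        · intro hlt; omega

lemma mrun_factor (f u : List A) (h : (mrun f u : ℕ) = f.length) (α : ℕ → A) :
    hasFactor f (cat u α) := by
  obtain ⟨k, hk, hm⟩ := (mdel_inv f u).1 h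
  refine ⟨k, fun i hi => ?_⟩
  have hki : k + i < u.length := by omega
  simp [cat, hki, hm i hi]

def facMon (f : List A) (g : Bool) : Monitor A where
  Q := Fin (f.length + 1)
  finQ := Finite.of_fintype _
  δ := mdel f
  init := ⟨0, by omega⟩
  bot := cond g none (some ⟨f.length, by omega⟩)
  top := cond g (some ⟨f.length, by omega⟩) none
  sink_exists := by cases g <;> simp
  bot_ne_top := by cases g <;> simp
  bot_absorb := by
    cases g with
    | false =>
        intro p a hp
        injection hp with hp
        subst hp; simp [mdel]
    | true => intro p a hp; exact absurd hp (by simp)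
  top_absorb := by
    cases g with
    | true =>
        intro p a hp
        injection hp with hp
        subst hp; simp [mdel]
    | false => intro p a hp; exact absurd hp (by simp)
  reach := by
    intro q
    obtain ⟨w, hw⟩ := mdel_reach f q
    cases g with
    | true => exact ⟨w, Or.inr (by simp [hw])⟩
    | false => exact ⟨w, Or.inl (by simp [hw])⟩

lemma facMon_card (f : List A) (g : Bool) : Nat.card (facMon f g).Q ≤ f.length + 2 := by
  simp [facMon, Nat.card_eq_fintype_card]

lemma facMon_isMonitorFor_true (L : Set (ℕ → A)) (f : List A)
    (h : ∀ α, hasFactor f α → α ∈ L) : (facMon f true).IsMonitorFor L := by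
  intro u
  constructor
  · intro hbot; simp [facMon] at hbot
  · intro htop α
    have htop' : (⟨f.length, by omega⟩ : Fin (f.length + 1)) = u.foldl (mdel f) ⟨0, by omega⟩ :=
      Option.some.inj htop
    have hval : (mrun f u : ℕ) = f.length := by rw [mrun, ← htop']
    exact h _ (mrun_factor f u hval α)

lemma facMon_isMonitorFor_false (L : Set (ℕ → A)) (f : List A)
    (h : ∀ α, hasFactor f α → α ∉ L) : (facMon f false).IsMonitorFor L := by
  intro u
  constructor
  · intro hbot α
    have hbot' : (⟨f.length, by omega⟩ : Fin (f.length + 1)) = u.foldl (mdel f) ⟨0, by omega⟩ :=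
      Option.some.inj hbot
    have hval : (mrun f u : ℕ) = f.length := by rw [mrun, ← hbot']
    exact h _ (mrun_factor f u hval α)
  · intro htop; simp [facMon] at htop


end Aux


/-- If some finite word `f` is a guaranteed factor (`Σ* f Σ^ω ⊆ L`) or a
forbidden factor (`Σ* f Σ^ω ∩ L = ∅`) for `L`, then `L` is monitorable, and
there is a monitor for `L` with at most `|f| + 2` states. -/

theorem stmt2 {A : Type*} [Fintype A] [Nonempty A] (L : Set (ℕ → A)) (f : List A)
    (hf : (∀ α, hasFactor f α → α ∈ L) ∨ (∀ α, hasFactor f α → α ∉ L)) :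
    Monitorable L ∧
      ∃ M : Monitor A, M.IsMonitorFor L ∧ Nat.card M.Q ≤ f.length + 2 := by
  classical
  rcases hf with h | h
  · refine ⟨⟨facMon f true, facMon_isMonitorFor_true L f h⟩,
      facMon f true, facMon_isMonitorFor_true L f h, facMon_card f true⟩
  · refine ⟨⟨facMon f false, facMon_isMonitorFor_false L f h⟩,
      facMon f false, facMon_isMonitorFor_false L f h, facMon_card f false⟩
end

section
/- Let Σ be a finite alphabet with at least two letters. For α ∈ Σ^ω define L_α = {β ∈ Σ^ω : α and β share an infinite suffix, i.e. there exist k, l ∈ ℕ with α(k+n) = β(l+n) for all n}. Then: (i) for every α and every finite word x ∈ Σ*, the quotient satisfies L_α(x) = L_α; and (ii) the family of sets {L_α : α ∈ Σ^ω} is uncountable. -/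
open Classical

def quotientBy {A : Type*} (L : Set (ℕ → A)) (x : List A) : Set (ℕ → A) :=
  {α | cat x α ∈ L}

def sharesSuffix {A : Type*} (α β : ℕ → A) : Prop :=
  ∃ k l, ∀ n, α (k + n) = β (l + n)

lemma cat_add {A : Type*} (x : List A) (β : ℕ → A) (m : ℕ) :
    cat x β (x.length + m) = β m := by
  simp [cat, Nat.not_lt.2 (Nat.le_add_right _ _)]

lemma class_countable {A : Type*} [Fintype A] (α : ℕ → A) :
    ({β : ℕ → A | sharesSuffix α β}).Countable := by
  have heq : {β : ℕ → A | sharesSuffix α β}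
      = ⋃ p : ℕ × ℕ, {β | ∀ n, α (p.1 + n) = β (p.2 + n)} := by
    ext β
    simp only [Set.mem_setOf_eq, Set.mem_iUnion, sharesSuffix, Prod.exists]
  rw [heq]
  refine Set.countable_iUnion fun ⟨k, l⟩ => ?_
  refine Set.Finite.countable ?_
  refine Set.Finite.of_finite_image (f := fun β (i : Fin l) => β i)
    (Set.Finite.subset (Set.finite_univ) (Set.subset_univ _)) ?_
  intro β hβ γ hγ hfg
  funext m
  by_cases hm : m < l
  · exact congrFun hfg ⟨m, hm⟩
  · have hm' : m = l + (m - l) := by omega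
    rw [hm', ← hβ, hγ]

/-- For a finite alphabet with at least two letters and
`L_α = {β : α and β share an infinite suffix}`: (i) every quotient of `L_α`
equals `L_α`; (ii) the family `{L_α : α ∈ Σ^ω}` is uncountable. -/
theorem stmt4 {A : Type*} [Fintype A] (h2 : 2 ≤ Nat.card A) :
    (∀ (α : ℕ → A) (x : List A),
        quotientBy {β : ℕ → A | sharesSuffix α β} x = {β : ℕ → A | sharesSuffix α β}) ∧
      ¬ (Set.range fun α : ℕ → A => {β : ℕ → A | sharesSuffix α β}).Countable := by
  constructor
  · intro α x
    ext β
    simp only [quotientBy, Set.mem_setOf_eq]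
    constructor
    · rintro ⟨k, l, h⟩
      refine ⟨k + x.length, l, fun n => ?_⟩
      have h1 := h (x.length + n)
      have h2 : l + (x.length + n) = x.length + (l + n) := by ring
      rw [h2, cat_add] at h1
      rw [← h1]; ring_nf
    · rintro ⟨k, l, h⟩
      refine ⟨k, x.length + l, fun n => ?_⟩
      have h2 : x.length + l + n = x.length + (l + n) := by ring
      rw [h2, cat_add]
      exact h n
  · intro hc
    -- universe is union of classes
    have hmem : ∀ α : ℕ → A, α ∈ {β : ℕ → A | sharesSuffix α β} := fun α =>
      ⟨0, 0, fun n => rfl⟩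
    have huniv : (Set.univ : Set (ℕ → A)) ⊆
        ⋃₀ (Set.range fun α : ℕ → A => {β : ℕ → A | sharesSuffix α β}) := by
      intro α _
      exact ⟨_, ⟨α, rfl⟩, hmem α⟩
    have hcu : (Set.univ : Set (ℕ → A)).Countable := by
      refine Set.Countable.mono huniv (Set.Countable.sUnion hc ?_)
      rintro t ⟨α, rfl⟩
      exact class_countable α
    have hco : Countable (ℕ → A) := Set.countable_univ_iff.mp hcu
    have hnt : Nontrivial A := by rw [← Finite.one_lt_card_iff_nontrivial]; omega
    obtain ⟨a, b, hab⟩ := hnt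
    have hj : Function.Injective (fun (s : Set ℕ) (n : ℕ) => if n ∈ s then a else b) := by
      intro s t hst
      ext n
      have := congrFun hst n
      by_cases hn : n ∈ s <;> by_cases hn' : n ∈ t <;>
        simp_all
    have : Countable (Set ℕ) := hj.countable
    obtain ⟨f, hf⟩ := (countable_iff_exists_injective (Set ℕ)).mp this
    exact Function.cantor_injective f hf
end

section
/- Let L ⊆ Σ^ω be any monitorable language and let M be a monitor for L with n states. Then there exists a finite word w of length at most (n−1)² such that for all finite words x ∈ Σ*, either xwΣ^ω ⊆ L or xwΣ^ω ∩ L = ∅. -/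
/-- The number of states of a monitor, counting the states after merging
`⊥` and `⊤` into a single state. -/
noncomputable def Monitor.states {A : Type*} (M : Monitor A) : ℕ :=
  Nat.card M.Q - (if M.bot.isSome && M.top.isSome then 1 else 0)

/-! Every non-sink state reaches a sink, and by cutting loops out of a shortest such word it does
so within `k` steps, where `k = n - 1` is the number of non-sink states. Since sinks are absorbing,
driving the `k` non-sink states into the sinks one after another yields a word of length at most
`k²` that sends every state, in particular the state reached after any prefix `x`, to `⊥` or `⊤`. -/

section Synchronization

variable {Q A : Type*} {δ : Q → A → Q} {S : Set Q}

theorem foldl_mem_of_mem {q : Q} (hS : ∀ p ∈ S, ∀ a, δ p a ∈ S) (hq : q ∈ S) :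
    ∀ w : List A, w.foldl δ q ∈ S := by
  intro w
  induction w generalizing q with
  | nil => exact hq
  | cons a w ih => exact ih (hS q hq a)

variable [Finite Q]

/-- A word longer than the number of states outside `S` revisits a state before first entering
`S`; cutting out the loop gives a shorter word. -/
theorem exists_shorter_foldl_mem {q : Q} {w : List A} (hw : w.foldl δ q ∈ S)
    (hlen : Sᶜ.ncard < w.length) : ∃ v : List A, v.length < w.length ∧ v.foldl δ q ∈ S := by
  by_contra! hshort
  refine hlen.not_ge (Set.le_ncard_of_inj_on_range (fun i => (w.take i).foldl δ q)
    (fun i hi => hshort _ (by simpa using hi)) fun i hi j hj heq => ?_)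
  by_contra hij
  wlog hlt : i < j generalizing i j
  · exact this j hj i hi heq.symm (Ne.symm hij) (by omega)
  have hloop : (w.take i ++ w.drop j).foldl δ q = w.foldl δ q := by
    rw [List.foldl_append, heq, ← List.foldl_append, List.take_append_drop]
  refine hshort _ ?_ (hloop ▸ hw)
  simp only [List.length_append, List.length_take, List.length_drop]
  omega

theorem exists_foldl_mem_length_le {q : Q} {w : List A} (hw : w.foldl δ q ∈ S) :
    ∃ v : List A, v.length ≤ Sᶜ.ncard ∧ v.foldl δ q ∈ S := by
  induction hn : w.length using Nat.strong_induction_on generalizing w with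
  | _ n ih =>
    by_cases hlen : w.length ≤ Sᶜ.ncard
    · exact ⟨w, hlen, hw⟩
    obtain ⟨v, hv, hvS⟩ := exists_shorter_foldl_mem hw (not_le.mp hlen)
    exact ih _ (hn ▸ hv) hvS rfl

theorem exists_forall_mem_finset_foldl_mem (hS : ∀ p ∈ S, ∀ a, δ p a ∈ S)
    (hreach : ∀ q, ∃ w : List A, w.foldl δ q ∈ S) (T : Finset Q) :
    ∃ w : List A, w.length ≤ T.card * Sᶜ.ncard ∧ ∀ q ∈ T, w.foldl δ q ∈ S := by
  classical
  induction T using Finset.induction_on with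
  | empty => exact ⟨[], by simp, by simp⟩
  | insert p T hp ih =>
    obtain ⟨w, hw, hwS⟩ := ih
    obtain ⟨u, hu⟩ := hreach (w.foldl δ p)
    obtain ⟨v, hv, hvS⟩ := exists_foldl_mem_length_le hu
    refine ⟨w ++ v, ?_, ?_⟩
    · rw [List.length_append, Finset.card_insert_of_notMem hp, add_mul, one_mul]
      omega
    · simp only [Finset.mem_insert, forall_eq_or_imp, List.foldl_append]
      exact ⟨hvS, fun q hq => foldl_mem_of_mem hS (hwS q hq) v⟩

theorem exists_synchronizing_word (hS : ∀ p ∈ S, ∀ a, δ p a ∈ S)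
    (hreach : ∀ q, ∃ w : List A, w.foldl δ q ∈ S) :
    ∃ w : List A, w.length ≤ Sᶜ.ncard ^ 2 ∧ ∀ q, w.foldl δ q ∈ S := by
  obtain ⟨w, hw, hwS⟩ := exists_forall_mem_finset_foldl_mem hS hreach Sᶜ.toFinite.toFinset
  refine ⟨w, by rwa [← Set.ncard_eq_toFinset_card, ← sq] at hw, fun q => ?_⟩
  by_cases hq : q ∈ S
  · exact foldl_mem_of_mem hS hq w
  · exact hwS q (by simpa using hq)

end Synchronization

namespace Monitor

variable {A : Type*} (M : Monitor A)

instance : Finite M.Q := M.finQ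

def sinks : Set M.Q := {q | M.bot = some q ∨ M.top = some q}

theorem δ_mem_sinks : ∀ q ∈ M.sinks, ∀ a, M.δ q a ∈ M.sinks := by
  rintro q (hq | hq) a
  · rw [M.bot_absorb q a hq]; exact Or.inl hq
  · rw [M.top_absorb q a hq]; exact Or.inr hq

theorem ncard_sinks : M.sinks.ncard = 1 + if M.bot.isSome && M.top.isSome then 1 else 0 := by
  have hsink := M.sink_exists
  have hne := M.bot_ne_top
  rcases hb : M.bot with _ | b <;> rcases ht : M.top with _ | t <;> simp_all [sinks, eq_comm]
  convert (Set.ncard_pair hne).symm using 2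
  ext; simp [eq_comm]

theorem ncard_compl_sinks : M.sinksᶜ.ncard = M.states - 1 := by
  rw [Set.ncard_compl, ncard_sinks, states, Nat.sub_add_eq, Nat.sub_right_comm]

end Monitor

theorem stmt7_general {A : Type*} (L : Set (ℕ → A))
    (M : Monitor A) (hM : M.IsMonitorFor L) (n : ℕ) (hn : M.states = n) :
    ∃ w : List A, w.length ≤ (n - 1) ^ 2 ∧
      ∀ x : List A, (∀ α, cat (x ++ w) α ∈ L) ∨ (∀ α, cat (x ++ w) α ∉ L) := by
  obtain ⟨w, hw, hsink⟩ := exists_synchronizing_word M.δ_mem_sinks M.reach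
  refine ⟨w, by rwa [M.ncard_compl_sinks, hn] at hw, fun x => ?_⟩
  rcases hsink (x.foldl M.δ M.init) with hbot | htop
  · exact Or.inr ((hM (x ++ w)).1 (by rwa [List.foldl_append]))
  · exact Or.inl ((hM (x ++ w)).2 (by rwa [List.foldl_append]))

/-- If `M` is a monitor for `L` with `n` states, then there is a word `w` of
length at most `(n-1)^2` such that for every `x`, either `xwΣ^ω ⊆ L` or
`xwΣ^ω ∩ L = ∅`. -/
theorem stmt7 {A : Type*} [Fintype A] [Nonempty A] (L : Set (ℕ → A))
    (M : Monitor A) (hM : M.IsMonitorFor L) (n : ℕ) (hn : M.states = n) :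
    ∃ w : List A, w.length ≤ (n - 1) ^ 2 ∧
      ∀ x : List A, (∀ α, cat (x ++ w) α ∈ L) ∨ (∀ α, cat (x ++ w) α ∉ L) :=
  stmt7_general L M hM n hn
end

section
/- Let Q be a finite set of n states, Σ a finite nonempty alphabet, δ : Q × Σ → Q a total transition function extended to finite words, and let z ∈ Q be a sink state (δ(z,a) = z for all a ∈ Σ) such that from every state q ∈ Q some word leads to z. Then there exists a finite word w of length at most (n−1)² such that δ(q, w) = z for every state q ∈ Q. -/
/-- If `z` is a sink state of a finite deterministic transition system with `n`
states, reachable from every state, then some word `w` of length at most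
`(n-1)^2` takes every state to `z`. -/
theorem stmt8 {Q A : Type*} [Finite Q] (n : ℕ) (hcard : Nat.card Q = n)
    (δ : Q → A → Q) (z : Q) (hz : ∀ a, δ z a = z)
    (hreach : ∀ q : Q, ∃ v : List A, v.foldl δ q = z) :
    ∃ w : List A, w.length ≤ (n - 1) ^ 2 ∧ ∀ q : Q, w.foldl δ q = z := by
  classical
  cases nonempty_fintype Q
  have hn : Fintype.card Q = n := by rw [← hcard, Nat.card_eq_fintype_card]
  have hn1 : 1 ≤ n := by rw [← hn]; exact Fintype.card_pos_iff.mpr ⟨z⟩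
  have hzfold : ∀ u : List A, u.foldl δ z = z := by
    intro u; induction u with
    | nil => rfl
    | cons a t ih => simp [List.foldl_cons, hz, ih]
  -- every state reaches z by a word of length ≤ n-1
  have key : ∀ m : ℕ, ∀ (u : List A) (q : Q), u.length = m → u.foldl δ q = z →
      ∃ u' : List A, u'.length ≤ n - 1 ∧ u'.foldl δ q = z := by
    intro m
    induction m using Nat.strong_induction_on with
    | _ m ih =>
      intro u q hlen hfold
      by_cases hm : m ≤ n - 1
      · exact ⟨u, hlen ▸ hm, hfold⟩
      · have cut : ∀ i j : ℕ, i < j → j ≤ m →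
            (u.take i).foldl δ q = (u.take j).foldl δ q →
            ∃ u' : List A, u'.length ≤ n - 1 ∧ u'.foldl δ q = z := by
          intro i j hlt hle heq
          have hf' : (u.take i ++ u.drop j).foldl δ q = z := by
            rw [List.foldl_append, heq, ← List.foldl_append, List.take_append_drop]
            exact hfold
          have hlen' : (u.take i ++ u.drop j).length < m := by
            simp [List.length_take, List.length_drop, hlen]
            omega
          exact ih _ hlen' _ q rfl hf'
        have hcardlt : Fintype.card Q < Fintype.card (Fin (m + 1)) := by
          simp [hn]; omega
        obtain ⟨i, j, hij, hf⟩ :=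
          Fintype.exists_ne_map_eq_of_card_lt
            (fun i : Fin (m + 1) => (u.take i).foldl δ q) hcardlt
        have hij' : (i : ℕ) ≠ (j : ℕ) := fun h => hij (Fin.ext h)
        rcases hij'.lt_or_gt with h | h
        · exact cut i j h (by omega) hf
        · exact cut j i h (by omega) hf.symm
  have short : ∀ q : Q, ∃ u : List A, u.length ≤ n - 1 ∧ u.foldl δ q = z := by
    intro q
    obtain ⟨v, hv⟩ := hreach q
    exact key v.length v q rfl hv
  -- glue: induction on number of bad states
  have main : ∀ k : ℕ, ∀ w : List A,
      (Finset.univ.filter (fun q => w.foldl δ q ≠ z)).card ≤ k →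
      ∃ v : List A, v.length ≤ k * (n - 1) ∧ ∀ q : Q, (w ++ v).foldl δ q = z := by
    intro k
    induction k with
    | zero =>
      intro w hw
      refine ⟨[], by simp, fun q => ?_⟩
      have : (Finset.univ.filter (fun q => w.foldl δ q ≠ z)) = ∅ :=
        Finset.card_eq_zero.mp (Nat.le_zero.mp hw)
      have hq : w.foldl δ q = z := by
        by_contra hq
        exact absurd (this ▸ Finset.mem_filter.mpr ⟨Finset.mem_univ q, hq⟩)
          (Finset.notMem_empty q)
      simpa using hq
    | succ k ih =>
      intro w hw
      by_cases hne : (Finset.univ.filter (fun q => w.foldl δ q ≠ z)).Nonempty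
      · obtain ⟨q0, hq0⟩ := hne
        obtain ⟨u, hulen, hufold⟩ := short (w.foldl δ q0)
        have hsub : (Finset.univ.filter (fun q => (w ++ u).foldl δ q ≠ z)) ⊆
            (Finset.univ.filter (fun q => w.foldl δ q ≠ z)).erase q0 := by
          intro q hq
          rw [Finset.mem_filter] at hq
          rw [List.foldl_append] at hq
          refine Finset.mem_erase.mpr ⟨?_, Finset.mem_filter.mpr ⟨Finset.mem_univ q, ?_⟩⟩
          · rintro rfl; exact hq.2 hufold
          · intro h; exact hq.2 (h ▸ hzfold u)
        have hcard' : (Finset.univ.filter (fun q => (w ++ u).foldl δ q ≠ z)).card ≤ k := by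
          have := Finset.card_le_card hsub
          rw [Finset.card_erase_of_mem hq0] at this
          omega
        obtain ⟨v, hvlen, hvfold⟩ := ih (w ++ u) hcard'
        refine ⟨u ++ v, ?_, fun q => ?_⟩
        · simp only [List.length_append]
          calc u.length + v.length ≤ (n - 1) + k * (n - 1) := Nat.add_le_add hulen hvlen
            _ = (k + 1) * (n - 1) := by ring
        · rw [← List.append_assoc]; exact hvfold q
      · refine ⟨[], by simp, fun q => ?_⟩
        rw [Finset.not_nonempty_iff_eq_empty] at hne
        have hq : w.foldl δ q = z := by
          by_contra hq
          exact absurd (hne ▸ Finset.mem_filter.mpr ⟨Finset.mem_univ q, hq⟩)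
            (Finset.notMem_empty q)
        simpa using hq
  have hstart : (Finset.univ.filter (fun q => ([] : List A).foldl δ q ≠ z)).card ≤ n - 1 := by
    have hsub : (Finset.univ.filter (fun q => ([] : List A).foldl δ q ≠ z)) ⊆
        Finset.univ.erase z := by
      intro q hq
      rw [Finset.mem_filter] at hq
      exact Finset.mem_erase.mpr ⟨fun h => hq.2 (by simp [h]), Finset.mem_univ q⟩
    calc _ ≤ (Finset.univ.erase z).card := Finset.card_le_card hsub
      _ = n - 1 := by rw [Finset.card_erase_of_mem (Finset.mem_univ z)]; simp [hn]
  obtain ⟨v, hvlen, hvfold⟩ := main (n - 1) [] hstart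
  exact ⟨v, by simpa [sq] using hvlen, fun q => by simpa using hvfold q⟩
end

section
/- Let L ⊆ Σ^ω be monitorable and accepted by some Büchi automaton with n states. Then there exists a monitor for L with at most 2^n states. -/
/-- Büchi automaton: finite state set, transition relation, initial and final states. -/
structure BA (A : Type*) where
  Q : Type
  finQ : Finite Q
  step : Q → A → Q → Prop
  I : Set Q
  F : Set Q

/-- `B` accepts `α` if some infinite run on `α` starting in `I` visits `F` infinitely often. -/
def BA.Accepts {A : Type*} (B : BA A) (α : ℕ → A) : Prop :=
  ∃ ρ : ℕ → B.Q, ρ 0 ∈ B.I ∧ (∀ n, B.step (ρ n) (α n) (ρ (n + 1))) ∧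
    ∀ n, ∃ m, n ≤ m ∧ ρ m ∈ B.F

def BA.Lang {A : Type*} (B : BA A) : Set (ℕ → A) := {α | B.Accepts α}

namespace St11

variable {A : Type*}

/-- Subset-construction transition. -/
def FStep (B : BA A) (S : Set B.Q) (a : A) : Set B.Q := {q' | ∃ q ∈ S, B.step q a q'}

/-- Existence of an accepting run starting in `S`. -/
def AccFrom (B : BA A) (S : Set B.Q) (α : ℕ → A) : Prop :=
  ∃ ρ : ℕ → B.Q, ρ 0 ∈ S ∧ (∀ n, B.step (ρ n) (α n) (ρ (n + 1))) ∧
    ∀ n, ∃ m, n ≤ m ∧ ρ m ∈ B.F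

def acons (a : A) (α : ℕ → A) : ℕ → A := fun n => Nat.casesOn n a α

lemma accepts_iff (B : BA A) (α : ℕ → A) : B.Accepts α ↔ AccFrom B B.I α := Iff.rfl

lemma acc_mono {B : BA A} {S T : Set B.Q} (h : S ⊆ T) {α} (ha : AccFrom B S α) :
    AccFrom B T α := by
  obtain ⟨ρ, h0, hs, hi⟩ := ha
  exact ⟨ρ, h h0, hs, hi⟩

lemma acc_step (B : BA A) (S : Set B.Q) (a : A) (α : ℕ → A) :
    AccFrom B (FStep B S a) α ↔ AccFrom B S (acons a α) := by
  constructor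
  · rintro ⟨ρ, ⟨q, hqS, hst⟩, hstep, hinf⟩
    refine ⟨fun n => Nat.casesOn n q ρ, hqS, ?_, ?_⟩
    · intro n
      cases n with
      | zero => exact hst
      | succ k => exact hstep k
    · intro n
      obtain ⟨m, hm, hF⟩ := hinf n
      exact ⟨m + 1, hm.trans (Nat.le_succ m), hF⟩
  · rintro ⟨ρ, h0, hstep, hinf⟩
    refine ⟨fun n => ρ (n + 1), ⟨ρ 0, h0, hstep 0⟩, fun n => hstep (n + 1), ?_⟩
    intro n
    obtain ⟨m, hm, hF⟩ := hinf (n + 1)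
    cases m with
    | zero => omega
    | succ k => exact ⟨k, by omega, hF⟩

lemma cat_nil (α : ℕ → A) : cat ([] : List A) α = α := by
  funext n; simp [cat]

lemma cat_cons (a : A) (u : List A) (α : ℕ → A) :
    cat (a :: u) α = acons a (cat u α) := by
  funext n
  cases n with
  | zero => simp [cat, acons]
  | succ k =>
    simp only [cat, acons, List.length_cons]
    by_cases h : k < u.length
    · rw [dif_pos (by omega), dif_pos h]
      simp
    · rw [dif_neg (by omega), dif_neg h]
      congr 1
      omega

lemma acc_fold (B : BA A) (u : List A) (S : Set B.Q) (α : ℕ → A) :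
    AccFrom B (u.foldl (FStep B) S) α ↔ AccFrom B S (cat u α) := by
  induction u generalizing S with
  | nil => rw [cat_nil]; rfl
  | cons a u ih =>
    rw [List.foldl_cons, ih, cat_cons, acc_step]

/-- "no continuation is accepted". -/
def PB (B : BA A) (S : Set B.Q) : Prop := ∀ α, ¬ AccFrom B S α
/-- "every continuation is accepted". -/
def PT (B : BA A) (S : Set B.Q) : Prop := ∀ α, AccFrom B S α

lemma PB_empty (B : BA A) : PB B ∅ := by
  rintro α ⟨ρ, h0, -⟩; exact h0

lemma not_PB_PT [Nonempty A] {B : BA A} {S : Set B.Q} (hb : PB B S) (ht : PT B S) : False :=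
  hb (fun _ => Classical.arbitrary A) (ht _)

lemma PB_step {B : BA A} {S : Set B.Q} (h : PB B S) (a : A) : PB B (FStep B S a) := by
  intro α hα
  exact h (acons a α) ((acc_step B S a α).1 hα)

lemma PT_step {B : BA A} {S : Set B.Q} (h : PT B S) (a : A) : PT B (FStep B S a) := by
  intro α
  exact (acc_step B S a α).2 (h (acons a α))

lemma PT_univ_of {B : BA A} {S : Set B.Q} (h : PT B S) : PT B Set.univ :=
  fun α => acc_mono (Set.subset_univ S) (h α)

open Classical in
/-- Normalization: collapse definite states to `univ` / `∅`. -/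
noncomputable def nrm (B : BA A) (T : Set B.Q) : Set B.Q :=
  if PT B T then Set.univ else if PB B T then ∅ else T

noncomputable def stp (B : BA A) (S : Set B.Q) (a : A) : Set B.Q := nrm B (FStep B S a)

lemma nrm_cases (B : BA A) (T : Set B.Q) :
    (nrm B T = Set.univ ∧ PT B T) ∨ (nrm B T = ∅ ∧ PB B T) ∨ (nrm B T = T) := by
  unfold nrm
  by_cases h1 : PT B T
  · exact Or.inl ⟨if_pos h1, h1⟩
  · rw [if_neg h1]
    by_cases h2 : PB B T
    · exact Or.inr (Or.inl ⟨if_pos h2, h2⟩)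
    · exact Or.inr (Or.inr (if_neg h2))

lemma FStep_empty (B : BA A) (a : A) : FStep B ∅ a = ∅ := by
  ext q; simp [FStep]

lemma not_PT_empty [Nonempty A] (B : BA A) : ¬ PT B (∅ : Set B.Q) :=
  fun h => not_PB_PT (PB_empty B) h

lemma stp_empty [Nonempty A] (B : BA A) (a : A) : stp B ∅ a = ∅ := by
  unfold stp
  rw [FStep_empty]
  unfold nrm
  rw [if_neg (not_PT_empty B), if_pos (PB_empty B)]

lemma stp_univ (B : BA A) (a : A) (h : PT B Set.univ) : stp B Set.univ a = Set.univ := by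
  unfold stp nrm
  rw [if_pos (PT_step h a)]

noncomputable def init0 (B : BA A) : Set B.Q := nrm B B.I

noncomputable def uF (B : BA A) (u : List A) : Set B.Q := List.foldl (stp B) (init0 B) u

def RS (B : BA A) (u : List A) : Set B.Q := List.foldl (FStep B) B.I u

lemma inv [Nonempty A] (B : BA A) (u : List A) :
    (uF B u = RS B u) ∨ (uF B u = ∅ ∧ PB B (RS B u)) ∨
      (uF B u = Set.univ ∧ PT B (RS B u) ∧ PT B Set.univ) := by
  induction u using List.reverseRecOn with
  | nil =>
    show (nrm B B.I = B.I) ∨ _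
    rcases nrm_cases B B.I with ⟨h, ht⟩ | ⟨h, hb⟩ | h
    · exact Or.inr (Or.inr ⟨h, ht, PT_univ_of ht⟩)
    · exact Or.inr (Or.inl ⟨h, hb⟩)
    · exact Or.inl h
  | append_singleton u a ih =>
    have hu : uF B (u ++ [a]) = stp B (uF B u) a := by
      simp [uF, List.foldl_append]
    have hr : RS B (u ++ [a]) = FStep B (RS B u) a := by
      simp [RS, List.foldl_append]
    rcases ih with h | ⟨h, hb⟩ | ⟨h, ht, htu⟩
    · rw [hu, h, hr]
      rcases nrm_cases B (FStep B (RS B u) a) with ⟨h2, ht2⟩ | ⟨h2, hb2⟩ | h2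
      · exact Or.inr (Or.inr ⟨h2, ht2, PT_univ_of ht2⟩)
      · exact Or.inr (Or.inl ⟨h2, hb2⟩)
      · exact Or.inl h2
    · rw [hu, h, hr]
      exact Or.inr (Or.inl ⟨stp_empty B a, PB_step hb a⟩)
    · rw [hu, h, hr]
      exact Or.inr (Or.inr ⟨stp_univ B a htu, PT_step ht a, htu⟩)

lemma toBot [Nonempty A] (B : BA A) (v : List A) (a0 : A) (h : PB B (RS B v)) :
    uF B (v ++ [a0]) = ∅ := by
  have hu : uF B (v ++ [a0]) = stp B (uF B v) a0 := by
    simp [uF, List.foldl_append]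
  rcases inv B v with h1 | ⟨h1, -⟩ | ⟨-, ht, -⟩
  · rw [hu, h1]
    unfold stp nrm
    rw [if_neg (fun hpt => not_PB_PT (PB_step h a0) hpt), if_pos (PB_step h a0)]
  · rw [hu, h1, stp_empty]
  · exact absurd ht (fun ht => not_PB_PT h ht)

lemma toTop [Nonempty A] (B : BA A) (v : List A) (a0 : A) (h : PT B (RS B v)) :
    uF B (v ++ [a0]) = Set.univ ∧ PT B Set.univ := by
  have hu : uF B (v ++ [a0]) = stp B (uF B v) a0 := by
    simp [uF, List.foldl_append]
  refine ⟨?_, PT_univ_of h⟩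
  rcases inv B v with h1 | ⟨-, hb⟩ | ⟨h1, -, htu⟩
  · rw [hu, h1]
    unfold stp nrm
    rw [if_pos (PT_step h a0)]
  · exact absurd h (fun h => not_PB_PT hb h)
  · rw [hu, h1, stp_univ B a0 htu]

end St11
namespace St11

/-- Trivial one-state monitor, used when the alphabet is empty. -/
def trivMon (A : Type*) : Monitor A where
  Q := Unit
  finQ := inferInstance
  δ := fun q _ => q
  init := ()
  bot := some ()
  top := none
  sink_exists := Or.inl rfl
  bot_ne_top := fun p q _ hq => absurd hq (by simp)
  bot_absorb := fun p a _ => rfl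
  top_absorb := fun p a hp => absurd hp (by simp)
  reach := fun q => ⟨[], Or.inl rfl⟩

end St11
namespace St11

variable {A : Type*}

/-- State space of the constructed monitor: reachable subset-states. -/
def MQ (B : BA A) : Type := {S : Set B.Q // ∃ u : List A, uF B u = S}

lemma uF_append (B : BA A) (u w : List A) :
    uF B (u ++ w) = List.foldl (stp B) (uF B u) w := by
  simp [uF, List.foldl_append]

noncomputable def Mδ (B : BA A) : MQ B → A → MQ B := fun S a =>
  ⟨stp B S.1 a, by
    obtain ⟨u, hu⟩ := S.2
    exact ⟨u ++ [a], by rw [uF_append, hu]; rfl⟩⟩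

lemma Mδ_val_foldl (B : BA A) (w : List A) (S : MQ B) :
    (List.foldl (Mδ B) S w).val = List.foldl (stp B) S.val w := by
  induction w generalizing S with
  | nil => rfl
  | cons a w ih => simp only [List.foldl_cons]; rw [ih]; rfl

open Classical in
noncomputable def mkMon [Nonempty A] (B : BA A)
    (hkey : ∀ u : List A, ∃ w, uF B (u ++ w) = ∅ ∨
      (uF B (u ++ w) = Set.univ ∧ PT B Set.univ)) : Monitor A where
  Q := MQ B
  finQ := by
    haveI := B.finQ
    exact inferInstanceAs (Finite {S : Set B.Q // ∃ u : List A, uF B u = S})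
  δ := Mδ B
  init := ⟨init0 B, ⟨[], rfl⟩⟩
  bot := if h : ∃ u : List A, uF B u = ∅ then some (⟨∅, h⟩ : MQ B) else none
  top := if h : (∃ u : List A, uF B u = Set.univ) ∧ PT B Set.univ then
    some (⟨Set.univ, h.1⟩ : MQ B) else none
  sink_exists := by
    obtain ⟨w, hw | hw⟩ := hkey []
    · left; rw [dif_pos ⟨[] ++ w, hw⟩]; rfl
    · right; rw [dif_pos ⟨⟨[] ++ w, hw.1⟩, hw.2⟩]; rfl
  bot_ne_top := by
    intro p q hp hq
    split at hp
    · split at hq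
      next h2 =>
        intro hpq
        have hv : (∅ : Set B.Q) = Set.univ := by
          have h1 : p.val = ∅ := (congrArg Subtype.val (Option.some.inj hp)).symm
          have h3 : q.val = Set.univ := (congrArg Subtype.val (Option.some.inj hq)).symm
          rw [← h1, ← h3, hpq]
        exact not_PB_PT (PB_empty B) (hv ▸ h2.2)
      next => exact absurd hq (by simp)
    · exact absurd hp (by simp)
  bot_absorb := by
    intro p a hp
    split at hp
    · have h1 : p.val = ∅ := (congrArg Subtype.val (Option.some.inj hp)).symm
      apply Subtype.ext
      show stp B p.val a = p.val
      rw [h1, stp_empty]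
    · exact absurd hp (by simp)
  top_absorb := by
    intro p a hp
    split at hp
    next h2 =>
      have h1 : p.val = Set.univ := (congrArg Subtype.val (Option.some.inj hp)).symm
      apply Subtype.ext
      show stp B p.val a = p.val
      rw [h1, stp_univ B a h2.2]
    next => exact absurd hp (by simp)
  reach := by
    intro q
    obtain ⟨u, hu⟩ := q.2
    obtain ⟨w, hw | hw⟩ := hkey u
    · refine ⟨w, Or.inl ?_⟩
      rw [dif_pos ⟨u ++ w, hw⟩]
      congr 1
      apply Subtype.ext
      show (∅ : Set B.Q) = (List.foldl (Mδ B) q w).val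
      rw [Mδ_val_foldl, ← hu, ← uF_append, hw]
    · refine ⟨w, Or.inr ?_⟩
      rw [dif_pos ⟨⟨u ++ w, hw.1⟩, hw.2⟩]
      congr 1
      apply Subtype.ext
      show (Set.univ : Set B.Q) = (List.foldl (Mδ B) q w).val
      rw [Mδ_val_foldl, ← hu, ← uF_append, hw.1]

open Classical in
lemma mkMon_bot [Nonempty A] (B : BA A) (hkey) {p : MQ B}
    (hp : (mkMon B hkey).bot = some p) : p.val = ∅ := by
  have h : (if h : ∃ u : List A, uF B u = ∅ then some (⟨∅, h⟩ : MQ B) else none)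
      = some p := hp
  split at h
  · exact (congrArg Subtype.val (Option.some.inj h)).symm
  · exact absurd h (by simp)

open Classical in
lemma mkMon_top [Nonempty A] (B : BA A) (hkey) {p : MQ B}
    (hp : (mkMon B hkey).top = some p) : p.val = Set.univ ∧ PT B Set.univ := by
  have h : (if h : (∃ u : List A, uF B u = Set.univ) ∧ PT B Set.univ then
      some (⟨Set.univ, h.1⟩ : MQ B) else none) = some p := hp
  split at h
  next h2 => exact ⟨(congrArg Subtype.val (Option.some.inj h)).symm, h2.2⟩
  next => exact absurd h (by simp)

end St11
/-- If `L` is monitorable and accepted by a Büchi automaton with `n` states,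
then there is a monitor for `L` with at most `2^n` states. -/
theorem stmt11 {A : Type*} [Fintype A] (L : Set (ℕ → A)) (hmon : Monitorable L)
    (B : BA A) (hB : B.Lang = L) (n : ℕ) (hn : Nat.card B.Q = n) :
    ∃ M : Monitor A, M.IsMonitorFor L ∧ Nat.card M.Q ≤ 2 ^ n := by
  classical
  rcases isEmpty_or_nonempty A with hA | hA
  · -- empty alphabet: trivial one-state monitor
    refine ⟨St11.trivMon A, ?_, ?_⟩
    · intro u
      refine ⟨?_, ?_⟩
      · intro _ α; exact (IsEmpty.false (α 0)).elim
      · intro hp; exact absurd hp (by simp [St11.trivMon])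
    · have : Nat.card (St11.trivMon A).Q = 1 := by
        show Nat.card Unit = 1
        simp
      rw [this]
      exact Nat.one_le_two_pow
  · -- nonempty alphabet
    haveI := B.finQ
    haveI : Fintype B.Q := Fintype.ofFinite _
    have hkey : ∀ u : List A, ∃ w, St11.uF B (u ++ w) = ∅ ∨
        (St11.uF B (u ++ w) = Set.univ ∧ St11.PT B Set.univ) := by
      intro u
      obtain ⟨M, hM⟩ := hmon
      obtain ⟨w, hw⟩ := M.reach (u.foldl M.δ M.init)
      have a0 : A := Classical.arbitrary A
      have hfold : (u ++ w).foldl M.δ M.init = w.foldl M.δ (u.foldl M.δ M.init) := by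
        rw [List.foldl_append]
      rcases hw with hb | ht
      · have h1 := (hM (u ++ w)).1 (by rw [hfold]; exact hb)
        have hpb : St11.PB B (St11.RS B (u ++ w)) := by
          intro α hα
          have hacc : B.Accepts (cat (u ++ w) α) := (St11.acc_fold B (u ++ w) B.I α).1 hα
          exact h1 α (by rw [← hB]; exact hacc)
        exact ⟨w ++ [a0], by
          rw [← List.append_assoc]
          exact Or.inl (St11.toBot B (u ++ w) a0 hpb)⟩
      · have h1 := (hM (u ++ w)).2 (by rw [hfold]; exact ht)
        have hpt : St11.PT B (St11.RS B (u ++ w)) := by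
          intro α
          have hL : cat (u ++ w) α ∈ B.Lang := by rw [hB]; exact h1 α
          exact (St11.acc_fold B (u ++ w) B.I α).2 hL
        exact ⟨w ++ [a0], by
          rw [← List.append_assoc]
          exact Or.inr (St11.toTop B (u ++ w) a0 hpt)⟩
    refine ⟨St11.mkMon B hkey, ?_, ?_⟩
    · intro u
      have hval : (u.foldl (St11.mkMon B hkey).δ (St11.mkMon B hkey).init).val
          = St11.uF B u := St11.Mδ_val_foldl B u _
      constructor
      · intro hp α hL
        have h0 : St11.uF B u = ∅ := by
          rw [← hval]; exact St11.mkMon_bot B hkey hp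
        have hpb : St11.PB B (St11.RS B u) := by
          rcases St11.inv B u with h | ⟨-, h⟩ | ⟨h, -, htu⟩
          · rw [← h, h0]; exact St11.PB_empty B
          · exact h
          · rw [h0] at h
            exact absurd (h ▸ htu) (fun h' => St11.not_PB_PT (St11.PB_empty B) h')
        have hacc : B.Accepts (cat u α) := by rw [← hB] at hL; exact hL
        exact hpb α ((St11.acc_fold B u B.I α).2 hacc)
      · intro hp α
        obtain ⟨h0, htu⟩ := St11.mkMon_top B hkey hp
        rw [hval] at h0
        have hpt : St11.PT B (St11.RS B u) := by
          rcases St11.inv B u with h | ⟨h, hpb⟩ | ⟨-, h, -⟩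
          · rw [← h, h0]; exact htu
          · rw [h0] at h
            exact absurd (h ▸ htu) (fun h' => St11.not_PB_PT (St11.PB_empty B) h')
          · exact h
        have hacc : B.Accepts (cat u α) := (St11.acc_fold B u B.I α).1 (hpt α)
        rw [← hB]; exact hacc
    · have h1 : Nat.card (St11.MQ B) ≤ Nat.card (Set B.Q) :=
        Nat.card_le_card_of_injective Subtype.val Subtype.val_injective
      have h2 : Nat.card (Set B.Q) = 2 ^ n := by
        rw [Nat.card_eq_fintype_card, Fintype.card_set, ← hn, Nat.card_eq_fintype_card]
      exact h2 ▸ h1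
end

section
/- For any language L ⊆ Σ^ω, the following are equivalent: (1) L is monitorable and deterministic ω-regular (i.e. L has a monitor and L is accepted by some deterministic Büchi automaton); (2) there exists a deterministic Büchi monitor (DBM) for L, i.e. a tuple (Q, Σ, δ, q₀, F, ⊥, ⊤) such that (Q, Σ, δ, q₀, F) is a deterministic Büchi automaton accepting L and (Q, Σ, δ, q₀, ⊥, ⊤) is a monitor for L. -/
/-- Deterministic Büchi automaton: partial transition function, unique initial state. -/
structure DBA (A : Type*) where
  Q : Type
  finQ : Finite Q
  δ : Q → A → Option Q
  init : Q
  F : Set Q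

/-- `D` accepts `α` if the run on `α` from the initial state is infinite and
visits `F` infinitely often. -/
def DBA.Accepts {A : Type*} (D : DBA A) (α : ℕ → A) : Prop :=
  ∃ ρ : ℕ → D.Q, ρ 0 = D.init ∧ (∀ n, D.δ (ρ n) (α n) = some (ρ (n + 1))) ∧
    ∀ n, ∃ m, n ≤ m ∧ ρ m ∈ D.F

def DBA.Lang {A : Type*} (D : DBA A) : Set (ℕ → A) := {α | D.Accepts α}

/-!
Run the monitor `M` and the DBA `D` for `L` in parallel, and discard the `D`-component as soon
as `M` reaches a verdict, so that `⊥` and `⊤` remain single absorbing states of the product.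
A word whose `M`-run reaches `⊤` lies in `L`, and one whose `M`-run reaches `⊥` does not;
making the product accept exactly when it visits `⊤` or a final state of `D` infinitely often
therefore handles these words correctly, and on every other word the product simulates `D`.
-/

section Runs

variable {A Q : Type*}

def run (δ : Q → A → Q) (q : Q) (α : ℕ → A) (n : ℕ) : Q :=
  ((List.range n).map α).foldl δ q

lemma run_zero (δ : Q → A → Q) (q : Q) (α : ℕ → A) : run δ q α 0 = q := rfl

lemma run_succ (δ : Q → A → Q) (q : Q) (α : ℕ → A) (n : ℕ) :
    run δ q α (n + 1) = δ (run δ q α n) (α n) := by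
  rw [run, List.range_succ, List.map_append, List.map_singleton, List.foldl_concat]
  rfl

lemma run_map {Q' : Type*} (f : Q → Q') {δ : Q → A → Q} {δ' : Q' → A → Q'}
    (h : ∀ q a, δ' (f q) a = f (δ q a)) (q : Q) (α : ℕ → A) (n : ℕ) :
    run δ' (f q) α n = f (run δ q α n) :=
  List.foldl_hom f h

lemma run_eq_of_absorbing {δ : Q → A → Q} {q p : Q} {α : ℕ → A} {n m : ℕ}
    (hp : ∀ a, δ p a = p) (hn : run δ q α n = p) (hnm : n ≤ m) : run δ q α m = p := by
  induction m, hnm using Nat.le_induction with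
  | base => exact hn
  | succ m _ ih => rw [run_succ, ih, hp]

lemma cat_map_range (α : ℕ → A) (n : ℕ) : cat ((List.range n).map α) (fun k => α (k + n)) = α := by
  funext m
  have hlen : ((List.range n).map α).length = n := by rw [List.length_map, List.length_range]
  by_cases hm : m < n
  · rw [cat, dif_pos (by rwa [hlen]), List.getElem_map, List.getElem_range]
  · rw [cat, dif_neg (by rwa [hlen]), hlen, Nat.sub_add_cancel (Nat.le_of_not_lt hm)]

end Runs

namespace DBA

variable {A : Type*}

def optionStep (D : DBA A) (o : Option D.Q) (a : A) : Option D.Q :=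
  o.bind (D.δ · a)

lemma accepts_iff_run_optionStep (D : DBA A) (α : ℕ → A) :
    D.Accepts α ↔ ∀ n, ∃ m, n ≤ m ∧ ∃ q ∈ D.F, run D.optionStep (some D.init) α m = some q := by
  constructor
  · rintro ⟨ρ, hρ0, hρ, hρF⟩
    have hrun : ∀ n, run D.optionStep (some D.init) α n = some (ρ n) := by
      intro n
      induction n with
      | zero => rw [run_zero, hρ0]
      | succ n ih => rw [run_succ, ih, ← hρ n]; rfl
    intro n
    obtain ⟨m, hnm, hm⟩ := hρF n
    exact ⟨m, hnm, ρ m, hm, hrun m⟩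
  · intro h
    have hsome : ∀ n, ∃ q, run D.optionStep (some D.init) α n = some q := by
      intro n
      obtain ⟨m, hnm, q, -, hq⟩ := h n
      rw [← Option.ne_none_iff_exists']
      intro hn
      have hnone := run_eq_of_absorbing (δ := D.optionStep) (fun _ => rfl) hn hnm
      rw [hnone] at hq
      cases hq
    choose ρ hρ using hsome
    refine ⟨ρ, Option.some_injective _ (hρ 0).symm, fun n => ?_, fun n => ?_⟩
    · rw [← hρ, run_succ, hρ]
      rfl
    · obtain ⟨m, hnm, q, hq, hm⟩ := h n
      rw [hρ m] at hm
      exact ⟨m, hnm, Option.some_injective _ hm ▸ hq⟩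

lemma accepts_mk_some_iff {Q : Type} (hQ : Finite Q) (δ : Q → A → Q) (q₀ : Q) (F : Set Q)
    (α : ℕ → A) :
    (DBA.mk Q hQ (fun q a => some (δ q a)) q₀ F).Accepts α ↔
      ∀ n, ∃ m, n ≤ m ∧ run δ q₀ α m ∈ F := by
  have hrun (m : ℕ) : run (DBA.mk Q hQ (fun q a => some (δ q a)) q₀ F).optionStep (some q₀) α m =
      some (run δ q₀ α m) :=
    run_map some (fun _ _ => rfl) q₀ α m
  simp only [accepts_iff_run_optionStep, hrun, Option.some.injEq, exists_eq_right']

end DBA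

namespace Monitor

variable {A : Type*} (M : Monitor A)

def toDBA (F : Set M.Q) : DBA A :=
  DBA.mk M.Q M.finQ (fun q a => some (M.δ q a)) M.init F

def IsSink (q : M.Q) : Prop :=
  M.bot = some q ∨ M.top = some q

variable {M}

lemma IsSink.absorb {q : M.Q} (hq : M.IsSink q) (a : A) : M.δ q a = q :=
  hq.elim (M.bot_absorb q a) (M.top_absorb q a)

variable {L : Set (ℕ → A)}

lemma IsMonitorFor.not_mem_of_bot (hM : M.IsMonitorFor L) {α : ℕ → A} {n : ℕ}
    (h : M.bot = some (run M.δ M.init α n)) : α ∉ L := by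
  rw [← cat_map_range α n]
  exact (hM _).1 h _

lemma IsMonitorFor.mem_of_top (hM : M.IsMonitorFor L) {α : ℕ → A} {n : ℕ}
    (h : M.top = some (run M.δ M.init α n)) : α ∈ L := by
  rw [← cat_map_range α n]
  exact (hM _).2 h _

variable (M) (D : DBA A)

open Classical in
noncomputable def prodStep (p : M.Q × Option D.Q) (a : A) : M.Q × Option D.Q :=
  (M.δ p.1 a, if M.IsSink (M.δ p.1 a) then none else D.optionStep p.2 a)

lemma foldl_prodStep_fst (w : List A) (p : M.Q × Option D.Q) :
    (w.foldl (M.prodStep D) p).1 = w.foldl M.δ p.1 :=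
  (List.foldl_hom Prod.fst fun _ _ => rfl).symm

lemma prodStep_of_isSink {p : M.Q × Option D.Q} {a : A} (h : M.IsSink (M.δ p.1 a)) :
    M.prodStep D p a = (M.δ p.1 a, none) := by
  rw [prodStep, if_pos h]

lemma prodStep_mk_of_isSink {q : M.Q} (hq : M.IsSink q) (o : Option D.Q) (a : A) :
    M.prodStep D (q, o) a = (q, none) := by
  have hδ : M.δ q a = q := hq.absorb a
  rw [prodStep_of_isSink M D (show M.IsSink (M.δ q a) by rwa [hδ])]
  exact congrArg (·, none) hδ

noncomputable def withDBA [Nonempty A] : Monitor A where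
  Q := M.Q × Option D.Q
  finQ := by
    have := M.finQ
    have := D.finQ
    infer_instance
  δ := M.prodStep D
  init := (M.init, some D.init)
  bot := M.bot.map (·, none)
  top := M.top.map (·, none)
  sink_exists := by simpa only [Option.isSome_map] using M.sink_exists
  bot_ne_top := by
    simp only [Option.map_eq_some_iff]
    rintro _ _ ⟨b, hb, rfl⟩ ⟨t, ht, rfl⟩ hbt
    exact M.bot_ne_top b t hb ht (congrArg Prod.fst hbt)
  bot_absorb := by
    simp only [Option.map_eq_some_iff]
    rintro _ a ⟨b, hb, rfl⟩
    exact M.prodStep_mk_of_isSink D (Or.inl hb) none a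
  top_absorb := by
    simp only [Option.map_eq_some_iff]
    rintro _ a ⟨t, ht, rfl⟩
    exact M.prodStep_mk_of_isSink D (Or.inr ht) none a
  reach := by
    rintro ⟨q, o⟩
    obtain ⟨w, hw⟩ := M.reach q
    obtain ⟨a⟩ := ‹Nonempty A›
    -- One extra letter after reaching a sink of `M` also drops the `D`-component.
    have hsink : M.IsSink (w.foldl M.δ q) := hw
    have hend : (w ++ [a]).foldl (M.prodStep D) (q, o) = (w.foldl M.δ q, none) := by
      rw [List.foldl_concat, prodStep_of_isSink M D] <;>
        rw [foldl_prodStep_fst, hsink.absorb a]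
      exact hsink
    refine ⟨w ++ [a], ?_⟩
    simp only [hend, Option.map_eq_some_iff, Prod.mk.injEq, and_true, exists_eq_right]
    exact hw

def prodFinal : Set (M.Q × Option D.Q) :=
  {p | M.top = some p.1 ∨ ∃ q ∈ D.F, p.2 = some q}

variable {M D}

lemma IsMonitorFor.withDBA [Nonempty A] (hM : M.IsMonitorFor L) :
    (M.withDBA D).IsMonitorFor L := by
  intro u
  have hfst : (u.foldl (M.withDBA D).δ (M.withDBA D).init).1 = u.foldl M.δ M.init :=
    foldl_prodStep_fst M D u _
  refine ⟨fun h => (hM u).1 ?_, fun h => (hM u).2 ?_⟩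
  · obtain ⟨b, hb, hbu⟩ := Option.map_eq_some_iff.mp h
    rwa [← hfst, ← hbu]
  · obtain ⟨t, ht, htu⟩ := Option.map_eq_some_iff.mp h
    rwa [← hfst, ← htu]

section ProductRun

variable (M D) (α : ℕ → A)

lemma run_prodStep_fst (n : ℕ) :
    (run (M.prodStep D) (M.init, some D.init) α n).1 = run M.δ M.init α n :=
  (run_map Prod.fst (fun _ _ => rfl) _ α n).symm

lemma run_prodStep_snd_of_isSink {n : ℕ} (h : M.IsSink (run M.δ M.init α (n + 1))) :
    (run (M.prodStep D) (M.init, some D.init) α (n + 1)).2 = none := by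
  rw [run_succ, prodStep_of_isSink]
  rwa [run_prodStep_fst, ← run_succ M.δ]

lemma run_prodStep_snd_of_forall_not_isSink (h : ∀ n, ¬ M.IsSink (run M.δ M.init α n)) (n : ℕ) :
    (run (M.prodStep D) (M.init, some D.init) α n).2 = run D.optionStep (some D.init) α n := by
  induction n with
  | zero => rfl
  | succ n ih =>
    have hn : ¬ M.IsSink (M.δ (run (M.prodStep D) (M.init, some D.init) α n).1 (α n)) := by
      rw [run_prodStep_fst, ← run_succ M.δ]
      exact h (n + 1)
    rw [run_succ, run_succ, prodStep, if_neg hn, ih]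

end ProductRun

lemma toDBA_withDBA_lang [Nonempty A] (hM : M.IsMonitorFor L) (hD : D.Lang = L) :
    ((M.withDBA D).toDBA (M.prodFinal D)).Lang = L := by
  ext α
  refine (DBA.accepts_mk_some_iff (Q := M.Q × Option D.Q) (M.withDBA D).finQ (M.prodStep D)
    (M.init, some D.init) (M.prodFinal D) α).trans ?_
  simp only [prodFinal, Set.mem_ofPred_eq, run_prodStep_fst]
  by_cases htop : ∃ n, M.top = some (run M.δ M.init α n)
  · obtain ⟨n, hn⟩ := htop
    refine iff_of_true (fun k => ⟨max k n, le_max_left k n, Or.inl ?_⟩) (hM.mem_of_top hn)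
    rwa [run_eq_of_absorbing (M.top_absorb _ · hn) rfl (le_max_right k n)]
  by_cases hbot : ∃ n, M.bot = some (run M.δ M.init α n)
  · obtain ⟨n, hn⟩ := hbot
    refine iff_of_false (fun hacc => ?_) (hM.not_mem_of_bot hn)
    obtain ⟨m, hnm, hm⟩ := hacc (n + 1)
    obtain ⟨k, rfl⟩ : ∃ k, m = k + 1 := ⟨m - 1, by omega⟩
    have hk : run M.δ M.init α (k + 1) = run M.δ M.init α n :=
      run_eq_of_absorbing (M.bot_absorb _ · hn) rfl (by omega)
    rcases hm with hm | ⟨q, -, hq⟩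
    · exact M.bot_ne_top _ _ hn hm hk.symm
    · rw [run_prodStep_snd_of_isSink M D α (hk ▸ Or.inl hn)] at hq
      cases hq
  · simp only [not_exists] at htop hbot
    have hnone (n : ℕ) : ¬ M.IsSink (run M.δ M.init α n) := not_or.mpr ⟨hbot n, htop n⟩
    simp only [htop, false_or, run_prodStep_snd_of_forall_not_isSink M D α hnone]
    rw [← hD, ← DBA.accepts_iff_run_optionStep]
    rfl

end Monitor

lemma exists_monitor_toDBA_lang_of_isEmpty {A : Type*} [IsEmpty A] (L : Set (ℕ → A)) :
    ∃ (M : Monitor A) (F : Set M.Q), M.IsMonitorFor L ∧ (M.toDBA F).Lang = L := by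
  have hL (α : ℕ → A) : False := isEmptyElim (α 0)
  let M : Monitor A :=
    { Q := Unit, finQ := inferInstance, δ := fun q _ => q, init := (), bot := some (), top := none,
      sink_exists := Or.inl rfl, bot_ne_top := fun _ _ _ h => (nomatch h),
      bot_absorb := fun _ _ _ => rfl, top_absorb := fun _ _ h => (nomatch h),
      reach := fun _ => ⟨[], Or.inl rfl⟩ }
  refine ⟨M, ∅, fun u => ⟨fun _ α => (hL α).elim, fun _ α => (hL α).elim⟩, ?_⟩
  ext α
  exact (hL α).elim

theorem stmt12_general {A : Type*} (L : Set (ℕ → A)) :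
    (Monitorable L ∧ ∃ D : DBA A, D.Lang = L) ↔
      ∃ (M : Monitor A) (F : Set M.Q), M.IsMonitorFor L ∧
        (DBA.mk M.Q M.finQ (fun q a => some (M.δ q a)) M.init F).Lang = L := by
  refine ⟨fun ⟨⟨M, hM⟩, D, hD⟩ => ?_, fun ⟨M, F, hM, hL⟩ => ⟨⟨M, hM⟩, _, hL⟩⟩
  rcases isEmpty_or_nonempty A with hA | hA
  · exact exists_monitor_toDBA_lang_of_isEmpty L
  · exact ⟨M.withDBA D, M.prodFinal D, hM.withDBA, Monitor.toDBA_withDBA_lang hM hD⟩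

/-- `L` is monitorable and deterministic ω-regular iff there is a deterministic
Büchi monitor for `L`, i.e. a monitor `M` for `L` together with final states `F`
such that the deterministic Büchi automaton with the same (total) transition
function, initial state and final states `F` accepts `L`. -/
theorem stmt12 {A : Type*} [Fintype A] (L : Set (ℕ → A)) :
    (Monitorable L ∧ ∃ D : DBA A, D.Lang = L) ↔
      ∃ (M : Monitor A) (F : Set M.Q), M.IsMonitorFor L ∧
        (DBA.mk M.Q M.finQ (fun q a => some (M.δ q a)) M.init F).Lang = L :=
  stmt12_general L
end

section
/- Let L ⊆ Σ^ω be accepted by some Büchi automaton (i.e. L is ω-regular). If for every finite word x ∈ Σ* there exists a finite word w ∈ Σ* such that xwΣ^ω ⊆ L or xwΣ^ω ∩ L = ∅, then L is monitorable (some monitor for L exists). -/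
/-!
The monitor's states are the left quotients `u⁻¹L = {α | uα ∈ L}`: reading `a` sends `u⁻¹L` to
`(ua)⁻¹L`, and the quotients `∅` and `Σ^ω` are absorbing, so they serve as `⊥` and `⊤`. The
hypothesis says precisely that one of them is reachable from every state. There are only
finitely many states because `u⁻¹L` is determined by the set of states of a Büchi automaton
for `L` reachable on `u`.
-/

section LeftQuotient

variable {A : Type*}

@[simp] lemma cat_nil (α : ℕ → A) : cat [] α = α := by
  funext n
  simp [cat]

lemma cat_cons (a : A) (u : List A) (α : ℕ → A) :
    cat (a :: u) α = Stream'.cons a (cat u α) := by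
  funext n
  cases n <;> simp [cat, Stream'.cons]

lemma cat_append (u v : List A) (α : ℕ → A) : cat (u ++ v) α = cat u (cat v α) := by
  induction u with
  | nil => simp
  | cons a u ih => rw [List.cons_append, cat_cons, cat_cons, ih]

def leftQuotient (L : Set (ℕ → A)) (u : List A) : Set (ℕ → A) := {α | cat u α ∈ L}

@[simp] lemma leftQuotient_nil (L : Set (ℕ → A)) : leftQuotient L [] = L := by
  simp [leftQuotient]

lemma leftQuotient_append (L : Set (ℕ → A)) (u v : List A) :
    leftQuotient L (u ++ v) = leftQuotient (leftQuotient L u) v := by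
  ext α
  simp [leftQuotient, cat_append]

@[simp] lemma leftQuotient_empty (u : List A) : leftQuotient (∅ : Set (ℕ → A)) u = ∅ := rfl

@[simp] lemma leftQuotient_univ (u : List A) : leftQuotient (Set.univ : Set (ℕ → A)) u = .univ :=
  rfl

end LeftQuotient

namespace LeftQuotientMonitor

variable {A : Type*} (L : Set (ℕ → A)) [Small.{0} (Set.range (leftQuotient L))]

-- The left quotients of `L`, moved into `Type` because `Monitor.Q` must live there.
abbrev State : Type := Shrink.{0} (Set.range (leftQuotient L))

variable {L}

noncomputable def lang (q : State L) : Set (ℕ → A) := ((equivShrink _).symm q).1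

lemma lang_injective : Function.Injective (lang (L := L)) :=
  Subtype.val_injective.comp (equivShrink _).symm.injective

lemma exists_lang_eq (q : State L) : ∃ u, leftQuotient L u = lang q :=
  ((equivShrink _).symm q).2

lemma leftQuotient_lang_mem_range (q : State L) (w : List A) :
    leftQuotient (lang q) w ∈ Set.range (leftQuotient L) := by
  obtain ⟨u, hu⟩ := exists_lang_eq q
  exact ⟨u ++ w, by rw [leftQuotient_append, hu]⟩

noncomputable def next (q : State L) (a : A) : State L :=
  equivShrink _ ⟨leftQuotient (lang q) [a], leftQuotient_lang_mem_range q [a]⟩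

lemma lang_next (q : State L) (a : A) : lang (next q a) = leftQuotient (lang q) [a] := by
  simp [lang, next]

lemma lang_foldl_next (q : State L) (w : List A) :
    lang (w.foldl next q) = leftQuotient (lang q) w := by
  induction w generalizing q with
  | nil => simp
  | cons a w ih =>
    rw [List.foldl_cons, ih, lang_next, ← leftQuotient_append, List.singleton_append]

variable (L) in
noncomputable def init : State L := equivShrink _ ⟨L, [], leftQuotient_nil L⟩

@[simp] lemma lang_init : lang (init L) = L := by
  simp [lang, init]

open Classical in
noncomputable def sink (R : Set (ℕ → A)) : Option (State L) :=
  if h : R ∈ Set.range (leftQuotient L) then some (equivShrink _ ⟨R, h⟩) else none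

lemma sink_eq_some {R : Set (ℕ → A)} {q : State L} : sink R = some q ↔ lang q = R := by
  unfold sink
  split_ifs with h
  · rw [Option.some_inj, ← Equiv.eq_symm_apply, Subtype.ext_iff, eq_comm]
    rfl
  · simp only [false_iff]
    rintro rfl
    exact h (exists_lang_eq q)

variable (h : ∀ x, ∃ w, leftQuotient L (x ++ w) = .univ ∨ leftQuotient L (x ++ w) = ∅)
include h

lemma exists_sink_eq_some_foldl_next (q : State L) :
    ∃ w : List A, sink ∅ = some (w.foldl next q) ∨ sink .univ = some (w.foldl next q) := by
  obtain ⟨u, hu⟩ := exists_lang_eq q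
  obtain ⟨w, hw⟩ := h u
  refine ⟨w, ?_⟩
  rw [sink_eq_some, sink_eq_some, lang_foldl_next, ← hu, ← leftQuotient_append]
  exact hw.symm

variable [Nonempty A] [Finite (Set.range (leftQuotient L))]

noncomputable def monitor : Monitor A where
  Q := State L
  finQ := .of_equiv _ (equivShrink _)
  δ := next
  init := init L
  bot := sink ∅
  top := sink .univ
  sink_exists := by
    obtain ⟨w, hw | hw⟩ := exists_sink_eq_some_foldl_next h (init L)
    · exact .inl (Option.isSome_iff_exists.2 ⟨_, hw⟩)
    · exact .inr (Option.isSome_iff_exists.2 ⟨_, hw⟩)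
  bot_ne_top p q hp hq hpq := by
    rw [sink_eq_some] at hp hq
    exact Set.empty_ne_univ (hp ▸ hq ▸ congrArg lang hpq)
  bot_absorb p a hp := by
    rw [sink_eq_some] at hp
    exact lang_injective (by rw [lang_next, hp, leftQuotient_empty])
  top_absorb p a hp := by
    rw [sink_eq_some] at hp
    exact lang_injective (by rw [lang_next, hp, leftQuotient_univ])
  reach := exists_sink_eq_some_foldl_next h

theorem isMonitorFor_monitor : (monitor h).IsMonitorFor L := by
  intro u
  simp only [monitor, sink_eq_some, lang_foldl_next, lang_init]
  exact ⟨fun hu α hα => hu.subset hα, fun hu α => hu.symm.subset (Set.mem_univ α)⟩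

end LeftQuotientMonitor

theorem monitorable_of_finite_range_leftQuotient {A : Type*} [Nonempty A] {L : Set (ℕ → A)}
    (hfin : (Set.range (leftQuotient L)).Finite)
    (h : ∀ x, ∃ w, leftQuotient L (x ++ w) = .univ ∨ leftQuotient L (x ++ w) = ∅) :
    Monitorable L :=
  have : Finite (Set.range (leftQuotient L)) := hfin.to_subtype
  have : Small.{0} (Set.range (leftQuotient L)) := Countable.toSmall _
  ⟨LeftQuotientMonitor.monitor h, LeftQuotientMonitor.isMonitorFor_monitor h⟩

namespace BA

variable {A : Type*} (B : BA A)

def AcceptsFrom (q : B.Q) (α : ℕ → A) : Prop :=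
  ∃ ρ : ℕ → B.Q, ρ 0 = q ∧ (∀ n, B.step (ρ n) (α n) (ρ (n + 1))) ∧
    ∀ n, ∃ m, n ≤ m ∧ ρ m ∈ B.F

def langFrom (S : Set B.Q) : Set (ℕ → A) := {α | ∃ q ∈ S, B.AcceptsFrom q α}

def post (S : Set B.Q) (a : A) : Set B.Q := {q' | ∃ q ∈ S, B.step q a q'}

variable {B}

lemma acceptsFrom_cons {q : B.Q} {a : A} {α : ℕ → A} :
    B.AcceptsFrom q (Stream'.cons a α) ↔ ∃ q', B.step q a q' ∧ B.AcceptsFrom q' α := by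
  constructor
  · rintro ⟨ρ, rfl, hstep, hF⟩
    refine ⟨ρ 1, hstep 0, fun n => ρ (n + 1), rfl, fun n => hstep (n + 1), fun n => ?_⟩
    obtain ⟨m, hnm, hm⟩ := hF (n + 1)
    refine ⟨m - 1, by omega, ?_⟩
    show ρ (m - 1 + 1) ∈ B.F
    rwa [Nat.sub_add_cancel (by omega)]
  · rintro ⟨q', hq', ρ, rfl, hstep, hF⟩
    refine ⟨Stream'.cons q ρ, rfl, ?_, fun n => ?_⟩
    · rintro (_ | n)
      exacts [hq', hstep n]
    · obtain ⟨m, hnm, hm⟩ := hF n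
      exact ⟨m + 1, by omega, hm⟩

lemma cons_mem_langFrom {S : Set B.Q} {a : A} {α : ℕ → A} :
    Stream'.cons a α ∈ B.langFrom S ↔ α ∈ B.langFrom (B.post S a) := by
  constructor
  · rintro ⟨q, hq, hacc⟩
    obtain ⟨q', hqq', hacc'⟩ := acceptsFrom_cons.1 hacc
    exact ⟨q', ⟨q, hq, hqq'⟩, hacc'⟩
  · rintro ⟨q', ⟨q, hq, hqq'⟩, hacc⟩
    exact ⟨q, hq, acceptsFrom_cons.2 ⟨q', hqq', hacc⟩⟩

lemma leftQuotient_langFrom (S : Set B.Q) (u : List A) :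
    leftQuotient (B.langFrom S) u = B.langFrom (u.foldl B.post S) := by
  induction u generalizing S with
  | nil => simp
  | cons a u ih =>
    ext α
    rw [List.foldl_cons, ← ih]
    show cat (a :: u) α ∈ B.langFrom S ↔ cat u α ∈ B.langFrom (B.post S a)
    rw [cat_cons]
    exact cons_mem_langFrom

lemma lang_eq_langFrom : B.Lang = B.langFrom B.I := by
  ext α
  simp [Lang, Accepts, langFrom, AcceptsFrom]

theorem finite_range_leftQuotient_lang : (Set.range (leftQuotient B.Lang)).Finite := by
  have := B.finQ
  refine (Set.finite_range B.langFrom).subset ?_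
  rintro _ ⟨u, rfl⟩
  exact ⟨_, by rw [lang_eq_langFrom, leftQuotient_langFrom]⟩

end BA

theorem stmt17_general {A : Type*} [Nonempty A] (L : Set (ℕ → A))
    (B : BA A) (hB : B.Lang = L)
    (h : ∀ x : List A, ∃ w : List A,
      (∀ α, cat (x ++ w) α ∈ L) ∨ (∀ α, cat (x ++ w) α ∉ L)) :
    Monitorable L := by
  subst hB
  refine monitorable_of_finite_range_leftQuotient B.finite_range_leftQuotient_lang fun x => ?_
  obtain ⟨w, hw⟩ := h x
  exact ⟨w, hw.imp Set.eq_univ_of_forall Set.eq_empty_of_forall_notMem⟩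

/-- For ω-regular `L`: if for every finite word `x` there is `w` with
`xwΣ^ω ⊆ L` or `xwΣ^ω ∩ L = ∅`, then `L` is monitorable. -/
theorem stmt17 {A : Type*} [Fintype A] [Nonempty A] (L : Set (ℕ → A))
    (B : BA A) (hB : B.Lang = L)
    (h : ∀ x : List A, ∃ w : List A,
      (∀ α, cat (x ++ w) α ∈ L) ∨ (∀ α, cat (x ++ w) α ∉ L)) :
    Monitorable L :=
  stmt17_general L B hB h
end

section
/- Let Σ = {a,b}, n ∈ ℕ, and L = a^n b a Σ^ω \ Σ* b b Σ^ω (infinite words starting with a^n b a and never containing the factor bb). Then L is a safety property (L is closed in the Cantor topology), every deterministic Büchi automaton accepting L has more than n states, and yet there exists a monitor for L with only 3 states. -/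
-- ==== auxiliary lemmas ====

lemma cat_exists_iff {A : Type*} (w : List A) (α : ℕ → A) :
    (∃ β, α = cat w β) ↔ ∀ i : Fin w.length, α i = w.get i := by
  constructor
  · rintro ⟨β, rfl⟩ i
    simp [cat, i.isLt]
  · intro h
    refine ⟨fun k => α (k + w.length), funext fun m => ?_⟩
    by_cases hm : m < w.length
    · simpa [cat, hm] using (h ⟨m, hm⟩)
    · simp only [cat, dif_neg hm]
      rw [Nat.sub_add_cancel (le_of_not_gt hm)]

lemma closed_part {A : Type} [TopologicalSpace A] [DiscreteTopology A]
    (w : List A) (b : A) :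
    IsClosed {α : ℕ → A | (∃ β, α = cat w β) ∧ ¬ ∃ k, α k = b ∧ α (k + 1) = b} := by
  have h1 : {α : ℕ → A | ∃ β, α = cat w β} =
      ⋂ i : Fin w.length, (fun α : ℕ → A => α i) ⁻¹' {w.get i} := by
    ext α; simp [cat_exists_iff, Set.mem_iInter]
  have h2 : {α : ℕ → A | ¬ ∃ k, α k = b ∧ α (k + 1) = b} =
      (⋃ k : ℕ, ((fun α : ℕ → A => α k) ⁻¹' {b}) ∩ ((fun α : ℕ → A => α (k+1)) ⁻¹' {b}))ᶜ := by
    ext α; simp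
  have h3 : {α : ℕ → A | (∃ β, α = cat w β) ∧ ¬ ∃ k, α k = b ∧ α (k + 1) = b} =
      {α : ℕ → A | ∃ β, α = cat w β} ∩ {α : ℕ → A | ¬ ∃ k, α k = b ∧ α (k + 1) = b} := rfl
  rw [h3, h1, h2]
  refine IsClosed.inter (isClosed_iInter fun i => ?_) (IsOpen.isClosed_compl ?_)
  · exact IsClosed.preimage (continuous_apply _) isClosed_singleton
  · exact isOpen_iUnion fun k => IsOpen.inter
      (IsOpen.preimage (continuous_apply _) (isOpen_discrete _))
      (IsOpen.preimage (continuous_apply _) (isOpen_discrete _))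

def mδ {A : Type} [DecidableEq A] (b : A) : Fin 3 → A → Fin 3 := fun q c =>
  if q = 2 then 2 else if c = b then (if q = 0 then 1 else 2) else 0

lemma mon_sound {A : Type} [DecidableEq A] (a b : A) (u : List A) :
    (u.foldl (mδ b) 0 = 2 → ∃ k, k + 1 < u.length ∧ u.getD k a = b ∧ u.getD (k+1) a = b) ∧
    (u.foldl (mδ b) 1 = 2 → (∃ k, k + 1 < u.length ∧ u.getD k a = b ∧ u.getD (k+1) a = b)
      ∨ (0 < u.length ∧ u.getD 0 a = b)) := by
  induction u with
  | nil => constructor <;> intro h <;> simp [List.foldl] at h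
  | cons c v ih =>
    by_cases hc : c = b
    · subst hc
      constructor
      · intro h
        simp only [List.foldl_cons, mδ, if_neg (by decide : (0:Fin 3) ≠ 2), if_pos rfl,
          if_pos rfl] at h
        rcases ih.2 h with ⟨k, hk, h1, h2⟩ | ⟨h0, hb⟩
        · exact ⟨k + 1, by simpa using Nat.succ_lt_succ hk, by simpa using h1, by simpa using h2⟩
        · exact ⟨0, by simpa using h0, by simp, by simpa using hb⟩
      · intro _
        right
        exact ⟨by simp, by simp⟩
    · have e0 : mδ b 0 c = 0 := by simp [mδ, hc]
      have e1 : mδ b 1 c = 0 := by simp [mδ, hc]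
      constructor <;> intro h <;>
      · rw [List.foldl_cons] at h
        first
        | rw [e0] at h
        | rw [e1] at h
        rcases ih.1 h with ⟨k, hk, h1, h2⟩
        first
        | exact ⟨k + 1, by simpa using Nat.succ_lt_succ hk, by simpa using h1, by simpa using h2⟩
        | exact Or.inl ⟨k + 1, by simpa using Nat.succ_lt_succ hk, by simpa using h1, by simpa using h2⟩

section DBApart
variable {A : Type} (a b : A) (hab : a ≠ b) (n : ℕ)

lemma w_get (i : Fin (List.replicate n a ++ [b, a]).length) :
    (List.replicate n a ++ [b, a]).get i = if (i : ℕ) = n then b else a := by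
  have hi := i.isLt
  simp only [List.length_append, List.length_replicate, List.length_cons,
    List.length_nil] at hi
  rw [List.get_eq_getElem]
  rcases lt_trichotomy (i : ℕ) n with h | h | h
  · rw [List.getElem_append_left (by simpa using h), List.getElem_replicate, if_neg h.ne]
  · rw [List.getElem_append_right (by simpa using h.ge), if_pos h]
    simp [h]
  · have h2 : (i : ℕ) = n + 1 := by omega
    rw [List.getElem_append_right (by simp; omega), if_neg (by omega)]
    have h4 : (i : ℕ) - n = 1 := by omega
    simp [h4]

include hab in
lemma dba_lower (D : DBA A)
    (hL : D.Lang = {α : ℕ → A |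
        (∃ β, α = cat (List.replicate n a ++ [b, a]) β) ∧
          ¬ ∃ k, α k = b ∧ α (k + 1) = b}) : n < Nat.card D.Q := by
  classical
  by_contra hn
  push_neg at hn
  set w := List.replicate n a ++ [b, a] with hw
  have hwlen : w.length = n + 2 := by simp [hw]
  set α : ℕ → A := fun k => if k = n then b else a with hα
  have hαL : α ∈ D.Lang := by
    rw [hL]
    refine ⟨?_, ?_⟩
    · rw [cat_exists_iff]
      intro i
      rw [w_get a b n i]
    · rintro ⟨k, h1, h2⟩
      simp only [hα] at h1 h2
      by_cases hk : k = n
      · subst hk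
        rw [if_neg (by omega)] at h2
        exact hab h2
      · rw [if_neg hk] at h1
        exact hab h1
  obtain ⟨ρ, hinit, hstep, hinf⟩ := hαL
  have hfin := D.finQ
  have hpig : ∃ i j : Fin (n+1), i ≠ j ∧ ρ i = ρ j := by
    letI := Fintype.ofFinite D.Q
    have hc : Fintype.card D.Q < Fintype.card (Fin (n+1)) := by
      rw [Fintype.card_fin]
      have : Nat.card D.Q = Fintype.card D.Q := Nat.card_eq_fintype_card
      omega
    obtain ⟨i, j, hij, hρ⟩ := Fintype.exists_ne_map_eq_of_card_lt
      (fun i : Fin (n+1) => ρ i) hc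
    exact ⟨i, j, hij, hρ⟩
  obtain ⟨i, j, hij, hρ⟩ := hpig
  obtain ⟨I, J, hIJ, hJn, hρIJ⟩ : ∃ I J : ℕ, I < J ∧ J ≤ n ∧ ρ I = ρ J := by
    have hi := Nat.lt_succ_iff.mp i.isLt
    have hj := Nat.lt_succ_iff.mp j.isLt
    rcases lt_or_gt_of_ne hij with h | h
    · exact ⟨i, j, Fin.lt_def.mp h, hj, hρ⟩
    · exact ⟨j, i, Fin.lt_def.mp h, hi, hρ.symm⟩
  set d := J - I with hd
  have hd1 : 1 ≤ d := by omega
  set α' : ℕ → A := fun k => if k < I then α k else α (k + d) with hα'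
  set ρ' : ℕ → D.Q := fun k => if k ≤ I then ρ k else ρ (k + d) with hρ'
  have hρ'def : ∀ k, ρ' k = if k ≤ I then ρ k else ρ (k + d) := fun k => rfl
  have hα'def : ∀ k, α' k = if k < I then α k else α (k + d) := fun k => rfl
  have hacc : D.Accepts α' := by
    refine ⟨ρ', by rw [hρ'def, if_pos (Nat.zero_le I)]; exact hinit, ?_, ?_⟩
    · intro k
      rcases lt_trichotomy k I with h | h | h
      · have e1 : ρ' k = ρ k := by rw [hρ'def, if_pos h.le]
        have e2 : ρ' (k+1) = ρ (k+1) := by rw [hρ'def, if_pos (by omega)]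
        have e3 : α' k = α k := by rw [hα'def, if_pos h]
        rw [e1, e2, e3]; exact hstep k
      · subst h
        have e1 : ρ' k = ρ J := by rw [hρ'def, if_pos le_rfl, hρIJ]
        have e2 : ρ' (k+1) = ρ (J+1) := by
          rw [hρ'def, if_neg (by omega)]
          congr 1; omega
        have e3 : α' k = α J := by
          rw [hα'def, if_neg (lt_irrefl k)]
          congr 1; omega
        rw [e1, e2, e3]; exact hstep J
      · have e1 : ρ' k = ρ (k + d) := by rw [hρ'def, if_neg (by omega)]
        have e2 : ρ' (k+1) = ρ (k + d + 1) := by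
          rw [hρ'def, if_neg (by omega)]
          congr 1; omega
        have e3 : α' k = α (k + d) := by rw [hα'def, if_neg (by omega)]
        rw [e1, e2, e3]; exact hstep (k + d)
    · intro m
      obtain ⟨m2, hm2, hF⟩ := hinf (m + d + I + 1)
      refine ⟨m2 - d, by omega, ?_⟩
      have e : ρ' (m2 - d) = ρ m2 := by
        rw [hρ'def, if_neg (by omega)]
        congr 1; omega
      rwa [e]
  have hα'L : α' ∈ D.Lang := hacc
  rw [hL] at hα'L
  obtain ⟨⟨β, hβ⟩, -⟩ := hα'L
  have hn2 : n < w.length := by omega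
  have h1 : α' n = b := by
    have := (cat_exists_iff w α').mp ⟨β, hβ⟩ ⟨n, hn2⟩
    rw [this, w_get a b n ⟨n, hn2⟩]
    simp
  have h2 : α' n = a := by
    rw [hα'def, if_neg (by omega)]
    show (if n + d = n then b else a) = a
    rw [if_neg (by omega)]
  exact hab (h2 ▸ h1)

end DBApart

/-- For `Σ = {a,b}` and `L = a^n b a Σ^ω \\ Σ* b b Σ^ω`: `L` is a safety
property (closed in the Cantor topology), every DBA accepting `L` has more than
`n` states, yet there is a 3-state monitor for `L`. -/
theorem stmt18 {A : Type} [Fintype A] [TopologicalSpace A] [DiscreteTopology A]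
    (a b : A) (hab : a ≠ b) (hcard : Nat.card A = 2) (n : ℕ) :
    IsClosed {α : ℕ → A |
        (∃ β, α = cat (List.replicate n a ++ [b, a]) β) ∧
          ¬ ∃ k, α k = b ∧ α (k + 1) = b} ∧
      (∀ D : DBA A, D.Lang = {α : ℕ → A |
          (∃ β, α = cat (List.replicate n a ++ [b, a]) β) ∧
            ¬ ∃ k, α k = b ∧ α (k + 1) = b} → n < Nat.card D.Q) ∧
      (∃ M : Monitor A, M.IsMonitorFor {α : ℕ → A |
          (∃ β, α = cat (List.replicate n a ++ [b, a]) β) ∧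
            ¬ ∃ k, α k = b ∧ α (k + 1) = b} ∧ Nat.card M.Q = 3) := by
  classical
  refine ⟨closed_part _ b, fun D hD => dba_lower a b hab n D hD, ?_⟩
  refine ⟨⟨Fin 3, inferInstance, mδ b, 0, some 2, none, Or.inl rfl,
    fun p q h1 h2 => by simp at h2,
    fun p c h => by rw [← Option.some.inj h]; simp [mδ],
    fun p c h => by simp at h,
    fun q => ⟨[b, b], Or.inl (by fin_cases q <;> simp [mδ])⟩⟩, ?_, by simp⟩
  intro u
  constructor
  · intro h α hmem
    have hfold : u.foldl (mδ b) 0 = 2 := (Option.some.inj h).symm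
    obtain ⟨k, hk, h1, h2⟩ := (mon_sound a b u).1 hfold
    refine hmem.2 ⟨k, ?_, ?_⟩
    · show (if h : k < u.length then u[k] else α (k - u.length)) = b
      rw [dif_pos (by omega), ← List.getD_eq_getElem u a (by omega)]
      exact h1
    · show (if h : k + 1 < u.length then u[k+1] else α (k + 1 - u.length)) = b
      rw [dif_pos hk, ← List.getD_eq_getElem u a hk]
      exact h2
  · intro h
    simp at h
end

section
/- Let Σ = {a,b} and L = Σ*(bab ∪ bbb)Σ^ω ⊆ Σ^ω (infinite words containing the factor bab or the factor bbb). Then every monitor for L has at least 4 states. -/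
/-- For `Σ = {a,b}` and `L = Σ*(bab ∪ bbb)Σ^ω`, every monitor for `L` has at
least 4 states. -/
theorem stmt19 {A : Type} [Fintype A] (a b : A) (hab : a ≠ b)
    (hcard : Nat.card A = 2) :
    ∀ M : Monitor A, M.IsMonitorFor {α : ℕ → A |
        (∃ k, α k = b ∧ α (k + 1) = a ∧ α (k + 2) = b) ∨
        (∃ k, α k = b ∧ α (k + 1) = b ∧ α (k + 2) = b)} →
      4 ≤ Nat.card M.Q := by
  classical
  intro M hM
  have finQ := M.finQ
  -- `⊥` is never reached from the initial state
  have hnobot : ∀ u : List A, M.bot ≠ some (u.foldl M.δ M.init) := by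
    intro u hu
    have h := (hM u).1 hu (fun _ => b)
    apply h
    right
    refine ⟨u.length, ?_, ?_, ?_⟩ <;>
      · show cat u (fun _ => b) _ = b
        unfold cat
        rw [dif_neg (by omega)]
  -- some word reaches `⊤`
  have hex : ∃ n, ∃ w : List A, w.length = n ∧ M.top = some (w.foldl M.δ M.init) := by
    obtain ⟨w, hw⟩ := M.reach M.init
    rcases hw with h | h
    · exact absurd h (hnobot w)
    · exact ⟨w.length, w, rfl, h⟩
  obtain ⟨w, hwlen, hwtop⟩ := Nat.find_spec hex
  set n0 := Nat.find hex with hn0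
  have hmin : ∀ v : List A, M.top = some (v.foldl M.δ M.init) → n0 ≤ v.length :=
    fun v hv => Nat.find_le ⟨v, rfl, hv⟩
  -- the minimal word reaching ⊤ has length at least 3
  have h3 : 3 ≤ n0 := by
    have hmem := (hM w).2 hwtop (fun _ => a)
    have hb : ∀ k, cat w (fun _ => a) k = b → k < w.length := by
      intro k hkb
      by_contra h
      unfold cat at hkb
      rw [dif_neg h] at hkb
      exact hab hkb
    rcases hmem with ⟨k, hk⟩ | ⟨k, hk⟩ <;>
    · have := hb _ hk.2.2
      omega
  -- the four states reached along the last three letters are pairwise distinct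
  have keystep : ∀ i j : ℕ, i < j → j ≤ 3 →
      (w.take (n0 - 3 + i)).foldl M.δ M.init ≠ (w.take (n0 - 3 + j)).foldl M.δ M.init := by
    intro i j hij hj3 heq
    have h2 : ((w.take (n0 - 3 + i) ++ w.drop (n0 - 3 + j)).foldl M.δ M.init)
        = w.foldl M.δ M.init := by
      rw [List.foldl_append, heq, ← List.foldl_append, List.take_append_drop]
    have htv : M.top = some ((w.take (n0 - 3 + i) ++ w.drop (n0 - 3 + j)).foldl M.δ M.init) := by
      rw [h2]; exact hwtop
    have hL := hmin _ htv
    simp only [List.length_append, List.length_take, List.length_drop, hwlen] at hL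
    omega
  have hinj : Function.Injective
      (fun i : Fin 4 => (w.take (n0 - 3 + i.val)).foldl M.δ M.init) := by
    intro i j h
    rcases Nat.lt_trichotomy i.val j.val with hlt | heq | hgt
    · exact absurd h (keystep i.val j.val hlt (by omega))
    · exact Fin.ext heq
    · exact absurd h.symm (keystep j.val i.val hgt (by omega))
  have hcardle := Nat.card_le_card_of_injective _ hinj
  simpa using hcardle
end
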